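/- For a simple arrangement H̃ with lattice of flats L = L_{H̃}, the ring of global sections of the structure sheaf A (stalks Sym R^F, restrictions by setting variables outside the smaller flat to zero) is canonically isomorphic as a graded ring to the face ring R[Δ_{H̃}] of the matroid complex, via the map sending e_i to the i-th standard basis vector of R^F if i ∈ F and to 0 otherwise, on each stalk. -/

import Mathlib

open MvPolynomial

variable {I : Type} [Fintype I] [DecidableEq I]

def IsFlat (V : AffineSubspace ℝ (I → ℝ)) (F : Finset I) : Prop :=
  ∃ x ∈ V, ∀ i : I, i ∈ F ↔ x i = 0

def Essential (V : AffineSubspace ℝ (I → ℝ)) : Prop :=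
  ∀ i : I, ∃ x ∈ V, ∃ y ∈ V, x i ≠ y i

noncomputable def resF (V : AffineSubspace ℝ (I → ℝ)) (F : Finset I) :
    V.direction →ₗ[ℝ] ({i : I // i ∈ F} → ℝ) :=
  (LinearMap.funLeft ℝ ℝ (fun i : {i : I // i ∈ F} => (i : I))).comp V.direction.subtype

def IsSimple (V : AffineSubspace ℝ (I → ℝ)) : Prop :=
  ∀ F : Finset I, IsFlat V F →
    F.card + Module.finrank ℝ (LinearMap.ker (resF V F)) = Module.finrank ℝ V.direction

noncomputable def faceIdeal (Δ : Set (Finset I)) : Ideal (MvPolynomial I ℝ) :=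
  Ideal.span {p | ∃ S : Finset I, S ∉ Δ ∧ p = ∏ i ∈ S, (X i : MvPolynomial I ℝ)}

def powFaces (F : Finset I) : Set (Finset I) := {S | S ⊆ F}

/-- The localization of the structure sheaf at the lattice of flats:  the map from
`ℝ[e_i : i ∈ I]` to the product of the stalks `A(F) ≅ Sym ℝ^F` over all flats `F`.
On the stalk at `F` it sends `e_i` to the `i`-th standard coordinate of `ℝ^F` when
`i ∈ F` and to `0` otherwise. -/
noncomputable def toStalks (V : AffineSubspace ℝ (I → ℝ)) :
    MvPolynomial I ℝ →+*
      ((F : {F : Finset I // IsFlat V F}) → MvPolynomial I ℝ ⧸ faceIdeal (powFaces F.1)) :=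
  Pi.ringHom fun F => Ideal.Quotient.mk (faceIdeal (powFaces F.1))

/-!
By simplicity, the restriction from the direction of `V` to `ℝ^F` is onto for every flat `F`;
pushing a point of `V` with zero set `F` slightly along a direction vanishing exactly on
`G ⊆ F` (among the coordinates of `F`) shows that `G` is a flat too. So the flats form a
simplicial complex `Δ`. For a simplicial complex, membership in the face ideal is decided
monomial by monomial (a monomial lies in it iff its support is a non-face); hence the face
ideal is the intersection of the kernels of the stalk maps, and the stalk at `F` remembers
exactly the coefficients of the monomials supported in `F`. A compatible family glues to the
polynomial whose coefficient at a monomial with support `S ∈ Δ` is read off in the stalk at `S`.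
-/

open Filter Topology in
theorem exists_ne_zero_forall_add_mul_ne_zero {𝕜 ι : Type*} [NontriviallyNormedField 𝕜]
    [Finite ι] (x v : ι → 𝕜) : ∃ t ≠ 0, ∀ i, x i ≠ 0 → x i + t * v i ≠ 0 := by
  have hnear : ∀ i, ∀ᶠ t in 𝓝[≠] (0 : 𝕜), x i ≠ 0 → x i + t * v i ≠ 0 := by
    intro i
    by_cases hi : x i = 0
    · exact Eventually.of_forall fun _ h => (h hi).elim
    · have hcont : Continuous fun t : 𝕜 => x i + t * v i := by fun_prop
      have hlim := hcont.tendsto' 0 (x i) (by simp)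
      exact ((hlim.eventually_ne hi).filter_mono nhdsWithin_le_nhds).mono fun _ h _ => h
  exact (eventually_mem_nhdsWithin.and (eventually_all.2 hnear)).exists

section

variable {σ : Type}

theorem IsSimple.resF_surjective [Finite σ] {V : AffineSubspace ℝ (σ → ℝ)} (hV : IsSimple V)
    {F : Finset σ} (hF : IsFlat V F) : Function.Surjective (resF V F) := by
  rw [← LinearMap.range_eq_top]
  apply Submodule.eq_top_of_finrank_eq
  have hrank := LinearMap.finrank_range_add_finrank_ker (resF V F)
  rw [Module.finrank_fintype_fun_eq_card, Fintype.card_coe]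
  linarith [hV F hF]

theorem IsSimple.isLowerSet_isFlat [Finite σ] {V : AffineSubspace ℝ (σ → ℝ)} (hV : IsSimple V) :
    IsLowerSet {F : Finset σ | IsFlat V F} := by
  classical
  rintro F G (hGF : G ⊆ F) ⟨x, hxV, hx⟩
  obtain ⟨v, hv⟩ := hV.resF_surjective ⟨x, hxV, hx⟩ fun j => if (j : σ) ∈ G then 0 else 1
  have hvF : ∀ i ∈ F, (v : σ → ℝ) i = if i ∈ G then 0 else 1 := fun i hi => congrFun hv ⟨i, hi⟩
  obtain ⟨t, ht, hxt⟩ := exists_ne_zero_forall_add_mul_ne_zero x v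
  refine ⟨t • (v : σ → ℝ) + x, ?_, fun i => ?_⟩
  · simpa [vadd_eq_add] using
      AffineSubspace.vadd_mem_of_mem_direction (V.direction.smul_mem t v.2) hxV
  · simp only [Pi.add_apply, Pi.smul_apply, smul_eq_mul]
    by_cases hiF : i ∈ F
    · by_cases hiG : i ∈ G <;> simp [hiG, hvF i hiF, (hx i).1 hiF, ht]
    · have hxi : x i ≠ 0 := fun h => hiF ((hx i).2 h)
      rw [iff_false_intro fun h => hiF (hGF h), false_iff, add_comm]
      exact hxt i hxi

open Ideal.Quotient

theorem prod_X_eq_monomial_toFinsupp [DecidableEq σ] (S : Finset σ) :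
    ∏ i ∈ S, (X i : MvPolynomial σ ℝ) = monomial (Multiset.toFinsupp S.val) 1 := by
  rw [← prod_X_pow_eq_monomial, Multiset.toFinsupp_support, Finset.val_toFinset]
  refine Finset.prod_congr rfl fun i hi => ?_
  rw [Multiset.toFinsupp_apply, Multiset.count_eq_one_of_mem S.nodup hi, pow_one]

theorem toFinsupp_le_iff_subset_support [DecidableEq σ] (S : Finset σ) (d : σ →₀ ℕ) :
    Multiset.toFinsupp S.val ≤ d ↔ S ⊆ d.support := by
  simp only [Finsupp.le_def, Multiset.toFinsupp_apply, Multiset.count_eq_of_nodup S.nodup,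
    Finset.mem_val]
  refine ⟨fun h i hi => ?_, fun h i => ?_⟩
  · simpa [hi, Nat.one_le_iff_ne_zero] using h i
  · split_ifs with hi
    · exact Nat.one_le_iff_ne_zero.2 (Finsupp.mem_support_iff.1 (h hi))
    · exact Nat.zero_le _

theorem mem_faceIdeal_iff {Δ : Set (Finset σ)} (hΔ : IsLowerSet Δ) {p : MvPolynomial σ ℝ} :
    p ∈ faceIdeal Δ ↔ ∀ d ∈ p.support, d.support ∉ Δ := by
  classical
  have hspan : faceIdeal Δ =
      Ideal.span ((fun d => monomial d 1) '' ((fun S => Multiset.toFinsupp S.val) '' Δᶜ)) := by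
    rw [faceIdeal, Set.image_image]
    congr 1
    ext p
    simp [prod_X_eq_monomial_toFinsupp, eq_comm]
  rw [hspan, mem_ideal_span_monomial_image]
  simp only [Set.exists_mem_image, toFinsupp_le_iff_subset_support]
  exact forall₂_congr fun d _ =>
    ⟨fun ⟨S, hS, hSd⟩ hd => hS (hΔ hSd hd), fun hd => ⟨d.support, hd, subset_rfl⟩⟩

theorem isLowerSet_powFaces (F : Finset σ) : IsLowerSet (powFaces F) :=
  isLowerSet_Iic F

theorem mk_powFaces_eq_mk_iff {F : Finset σ} {p q : MvPolynomial σ ℝ} :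
    mk (faceIdeal (powFaces F)) p = mk _ q ↔
      ∀ d : σ →₀ ℕ, d.support ⊆ F → coeff d p = coeff d q := by
  rw [Ideal.Quotient.eq, mem_faceIdeal_iff (isLowerSet_powFaces F)]
  refine forall_congr' fun d => ?_
  rw [mem_support_iff, coeff_sub, sub_ne_zero, not_imp_comm, not_not]
  rfl

theorem faceIdeal_powFaces_mono {E F : Finset σ} (h : E ⊆ F) :
    faceIdeal (powFaces F) ≤ faceIdeal (powFaces E) := fun p hp => by
  rw [mem_faceIdeal_iff (isLowerSet_powFaces _)] at hp ⊢
  exact fun d hd hdE => hp d hd (hdE.trans h)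

theorem faceIdeal_eq_iInf_powFaces {Δ : Set (Finset σ)} (hΔ : IsLowerSet Δ) :
    faceIdeal Δ = ⨅ F : Δ, faceIdeal (powFaces F.1) := by
  ext p
  simp only [Submodule.mem_iInf, mem_faceIdeal_iff hΔ, mem_faceIdeal_iff (isLowerSet_powFaces _)]
  exact ⟨fun h F d hd hdF => h d hd (hΔ hdF F.2),
    fun h d hd hdΔ => h ⟨d.support, hdΔ⟩ d hd (Finset.Subset.refl _)⟩

theorem exists_coeff_eq_of_finite {R : Type*} [CommSemiring R] {Δ : Set (Finset σ)}
    (hfin : Δ.Finite) (q : Δ → MvPolynomial σ R) :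
    ∃ p : MvPolynomial σ R,
      ∀ d (hd : d.support ∈ Δ), coeff d p = coeff d (q ⟨d.support, hd⟩) := by
  classical
  let q' : Finset σ → MvPolynomial σ R := fun S => if h : S ∈ Δ then q ⟨S, h⟩ else 0
  let T := hfin.toFinset.biUnion fun S => (q' S).support
  refine ⟨∑ d ∈ T, monomial d (coeff d (q' d.support)), fun d hd => ?_⟩
  have hq' : q' d.support = q ⟨d.support, hd⟩ := dif_pos hd
  simp only [coeff_sum, coeff_monomial, Finset.sum_ite_eq', ← hq']
  split_ifs with hdT
  · rfl
  · refine (notMem_support_iff.1 fun hmem => hdT ?_).symm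
    exact Finset.mem_biUnion.2 ⟨d.support, hfin.mem_toFinset.2 hd, hmem⟩

theorem exists_forall_mk_eq_of_compatible {Δ : Set (Finset σ)} (hΔ : IsLowerSet Δ)
    (hfin : Δ.Finite) (s : (F : Δ) → MvPolynomial σ ℝ ⧸ faceIdeal (powFaces F.1))
    (hs : ∀ (E F : Δ) (h : E.1 ⊆ F.1), factor (faceIdeal_powFaces_mono h) (s F) = s E) :
    ∃ p, ∀ F, mk _ p = s F := by
  choose q hq using fun F => mk_surjective (s F)
  obtain ⟨p, hp⟩ := exists_coeff_eq_of_finite hfin q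
  refine ⟨p, fun F => ?_⟩
  rw [← hq F, mk_powFaces_eq_mk_iff]
  intro d hdF
  have hdΔ : d.support ∈ Δ := hΔ hdF F.2
  have hcompat := hs ⟨d.support, hdΔ⟩ F hdF
  rw [← hq, ← hq, factor_mk, mk_powFaces_eq_mk_iff] at hcompat
  rw [hp d hdΔ, hcompat d (Finset.Subset.refl _)]

theorem ker_toStalks (V : AffineSubspace ℝ (σ → ℝ)) :
    RingHom.ker (toStalks V) = ⨅ F : {F : Finset σ // IsFlat V F}, faceIdeal (powFaces F.1) := by
  rw [toStalks, Pi.ringHom, Pi.ker_ringHom]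
  simp only [Ideal.mk_ker]

end

theorem stmt11_general (V : AffineSubspace ℝ (I → ℝ))
    (hsimple : IsSimple V) :
    RingHom.ker (toStalks V) = faceIdeal {S : Finset I | IsFlat V S} ∧
    Set.range (toStalks V) =
      {s | ∀ (E F : {F : Finset I // IsFlat V F}) (h : E.1 ⊆ F.1)
          (hle : faceIdeal (powFaces F.1) ≤ faceIdeal (powFaces E.1)),
        Ideal.Quotient.factor hle (s F) = s E} := by
  have hflats : IsLowerSet {S : Finset I | IsFlat V S} := hsimple.isLowerSet_isFlat
  refine ⟨(ker_toStalks V).trans (faceIdeal_eq_iInf_powFaces hflats).symm, ?_⟩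
  ext s
  refine ⟨?_, fun hs => ?_⟩
  · rintro ⟨p, rfl⟩ E F _ hle
    exact Ideal.Quotient.factor_mk hle p
  · obtain ⟨p, hp⟩ :=
      exists_forall_mk_eq_of_compatible hflats (Set.toFinite _) s fun E F h => hs E F h _
    exact ⟨p, funext hp⟩

/-- for a simple arrangement, the ring of global sections of the structure
sheaf `A` on the lattice of flats is canonically isomorphic to the face ring
`ℝ[Δ_{H̃}]` of the matroid complex (whose faces are exactly the flats).  Concretely,
the canonical map from `ℝ[e_i : i ∈ I]` to the compatible families of stalk elements
is surjective onto the sections (compatible families) and has kernel the face ideal,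
exhibiting the desired isomorphism of graded rings. -/
theorem stmt11 (V : AffineSubspace ℝ (I → ℝ))
    (hne : (V : Set (I → ℝ)).Nonempty) (hess : Essential V)
    (hsimple : IsSimple V) :
    RingHom.ker (toStalks V) = faceIdeal {S : Finset I | IsFlat V S} ∧
    Set.range (toStalks V) =
      {s | ∀ (E F : {F : Finset I // IsFlat V F}) (h : E.1 ⊆ F.1)
          (hle : faceIdeal (powFaces F.1) ≤ faceIdeal (powFaces E.1)),
        Ideal.Quotient.factor hle (s F) = s E} :=
  stmt11_general V hsimple
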